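/- For any locally small (possibly large) category L, if K = P(L^op)^op then PK is complete; equivalently, the category of small functors from P(L^op) to Set is complete. -/

import Mathlib

open CategoryTheory CategoryTheory.Limits Opposite

universe w v v' u u'

/-- A functor `S : K ⥤ M` is (`w`-)small if it is the left Kan extension of its
restriction to some small full subcategory of `K`. -/
def IsSmallFunctor {K : Type u} [Category.{v} K] {M : Type u'} [Category.{v'} M]
    (S : K ⥤ M) : Prop :=
  ∃ P : K → Prop, Small.{w} (Subtype P) ∧
    S.IsLeftKanExtension (𝟙 (ObjectProperty.ι P ⋙ S))

/-- Representable presheaves are small. -/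
theorem isSmallFunctor_yoneda_obj {K : Type u} [Category.{v} K] (A : K) :
    IsSmallFunctor.{w} (yoneda.obj A) := by
  refine ⟨fun X => X = op A, ?_, ?_⟩
  · have : Subsingleton {X : Kᵒᵖ // X = op A} :=
      ⟨fun X Y => Subtype.ext (X.2.trans Y.2.symm)⟩
    infer_instance
  · set P : Kᵒᵖ → Prop := fun X => X = op A with hP
    set ι := ObjectProperty.ι P with hι
    constructor
    refine ⟨IsInitial.ofUniqueHom (fun E => StructuredArrow.homMk
      (yonedaEquiv.symm (E.hom.app ⟨op A, rfl⟩ (𝟙 A))) ?_) ?_⟩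
    · ext X f
      obtain ⟨X, hX⟩ := X
      subst hX
      have hnat := types_congr_hom (E.hom.naturality
        (show (⟨op A, rfl⟩ : ObjectProperty.FullSubcategory P) ⟶ ⟨op A, rfl⟩ from
          ObjectProperty.homMk f.op)) (𝟙 A)
      simp [ι] at hnat ⊢
      exact hnat.symm
    · intro E m
      apply StructuredArrow.hom_ext
      have hx := types_congr_hom (NatTrans.congr_app m.w ⟨op A, rfl⟩) (𝟙 A)
      have key : m.right = yonedaEquiv.symm (E.hom.app ⟨op A, rfl⟩ (𝟙 A)) := by
        apply yonedaEquiv.injective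
        rw [Equiv.apply_symm_apply]
        refine Eq.trans ?_ hx
        simp [ι, yonedaEquiv]
        rfl
      exact key

/-- The category of small presheaves on `K`. -/
abbrev SmallPresheaf (K : Type u) [Category.{v} K] : Type (max u (v + 1)) :=
  ObjectProperty.FullSubcategory (fun F : Kᵒᵖ ⥤ Type v => IsSmallFunctor.{v} F)

/-- The Yoneda embedding of `K` into its category of small presheaves. -/
def smallYoneda (K : Type u) [Category.{v} K] : K ⥤ SmallPresheaf K where
  obj A := ⟨yoneda.obj A, isSmallFunctor_yoneda_obj A⟩
  map f := ObjectProperty.homMk (yoneda.map f)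

/-- `L` is a limit of `S : C ⥤ A` weighted by `φ : C ⥤ Type v`, i.e. morphisms `a ⟶ L`
correspond, naturally in `a`, to natural transformations `φ ⟶ A(a, S-)`. -/
def IsWeightedLimit {C : Type u} [Category.{v} C] {A : Type u'} [Category.{v'} A]
    (φ : C ⥤ Type v) (S : C ⥤ A) (L : A) : Prop :=
  ∃ e : ∀ a : A, (a ⟶ L) ≃
      ((φ ⋙ uliftFunctor.{v'}) ⟶ (S ⋙ coyoneda.obj (op a) ⋙ uliftFunctor.{v})),
    ∀ (a a' : A) (f : a' ⟶ a) (g : a ⟶ L) (c : C) (x : φ.obj c),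
      (e a' (f ≫ g)).app c ⟨x⟩ = ⟨f ≫ ((e a g).app c ⟨x⟩).down⟩

/-- `L` is a colimit of `T : Cᵒᵖ ⥤ A` weighted by `φ : C ⥤ Type v`, i.e. morphisms `L ⟶ a`
correspond, naturally in `a`, to natural transformations `φ ⟶ A(T-, a)`. -/
def IsWeightedColimit {C : Type u} [Category.{v} C] {A : Type u'} [Category.{v'} A]
    (φ : C ⥤ Type v) (T : Cᵒᵖ ⥤ A) (L : A) : Prop :=
  ∃ e : ∀ a : A, (L ⟶ a) ≃
      ((φ ⋙ uliftFunctor.{v'}) ⟶ (T.rightOp ⋙ yoneda.obj a ⋙ uliftFunctor.{v})),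
    ∀ (a a' : A) (f : a ⟶ a') (g : L ⟶ a) (c : C) (x : φ.obj c),
      (e a' (g ≫ f)).app c ⟨x⟩ = ⟨((e a g).app c ⟨x⟩).down ≫ f⟩

/-- A class of weights with small domains. -/
def WeightClass : Type (v + 1) :=
  ∀ C : Cat.{v, v}, (C ⥤ Type v) → Prop

/-- A category is `Φ`-complete if it has all `φ`-weighted limits for `φ ∈ Φ`. -/
def PhiComplete (Φ : WeightClass.{v}) (A : Type u) [Category.{v'} A] : Prop :=
  ∀ (C : Cat.{v, v}) (φ : C ⥤ Type v), Φ C φ →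
    ∀ S : C ⥤ A, ∃ L : A, IsWeightedLimit φ S L

/-- A category is `Φ`-cocomplete if it has all `φ`-weighted colimits for `φ ∈ Φ`. -/
def PhiCocomplete (Φ : WeightClass.{v}) (A : Type u) [Category.{v'} A] : Prop :=
  ∀ (C : Cat.{v, v}) (φ : C ⥤ Type v), Φ C φ →
    ∀ T : Cᵒᵖ ⥤ A, ∃ L : A, IsWeightedColimit φ T L

/-- A functor is `Φ`-continuous if it preserves all `φ`-weighted limits for `φ ∈ Φ`. -/
def PhiContinuous (Φ : WeightClass.{v}) {A : Type u} [Category.{v'} A]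
    {B : Type u'} [Category.{w} B] (F : A ⥤ B) : Prop :=
  ∀ (C : Cat.{v, v}) (φ : C ⥤ Type v), Φ C φ →
    ∀ (S : C ⥤ A) (L : A), IsWeightedLimit φ S L → IsWeightedLimit φ (S ⋙ F) (F.obj L)

/-- The closure of a collection `P` of objects of `A` under `Φ`-weighted colimits. -/
inductive PhiClosure (Φ : WeightClass.{v}) {A : Type u} [Category.{v'} A]
    (P : A → Prop) : A → Prop
  | base {X : A} (hX : P X) : PhiClosure Φ P X
  | colim {C : Cat.{v, v}} (φ : C ⥤ Type v) (hφ : Φ C φ) (T : Cᵒᵖ ⥤ A)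
      (hT : ∀ c : Cᵒᵖ, PhiClosure Φ P (T.obj c)) {L : A}
      (hL : IsWeightedColimit φ T L) : PhiClosure Φ P L

/-- The smallness condition on a class of weights: for every small `C`, the closure of the
representables in the presheaf category of `C` under `Φ`-weighted colimits is small. -/
def SmallnessCondition (Φ : WeightClass.{v}) : Prop :=
  ∀ C : Cat.{v, v}, EssentiallySmall.{v} (ObjectProperty.FullSubcategory (PhiClosure Φ
    (fun F : Cᵒᵖ ⥤ Type v => ∃ c : C, Nonempty (F ≅ yoneda.obj c))))

/-- The soundness condition on a class of weights: for every small `Φ`-complete `D` and every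
`Φ`-continuous `ψ : D ⥤ Type v`, the weighted-colimit functor `ψ * (-) : [Dᵒᵖ, Type v] ⥤ Type v`
(i.e. the small-colimit-preserving extension of `ψ` along the Yoneda embedding) is
`Φ`-continuous. -/
def SoundnessCondition (Φ : WeightClass.{v}) : Prop :=
  ∀ D : Cat.{v, v}, PhiComplete Φ D → ∀ ψ : D ⥤ Type v, PhiContinuous Φ ψ →
    ∀ T : (Dᵒᵖ ⥤ Type v) ⥤ Type v, PreservesColimitsOfSize.{v, v} T →
      Nonempty ((yoneda : D ⥤ _) ⋙ T ≅ ψ) → PhiContinuous Φ T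

/-- `φ` belongs to the saturation of `Φ` if it lies in the closure of the representables
under `Φ`-weighted colimits in the presheaf category over its domain. -/
def InSaturation (Φ : WeightClass.{v}) (C : Cat.{v, v}) (φ : C ⥤ Type v) : Prop :=
  PhiClosure Φ (fun F : C ⥤ Type v => ∃ c : Cᵒᵖ, Nonempty (F ≅ coyoneda.obj c)) φ

/-- A category `J` is `α`-filtered when every diagram with fewer than `α` arrows
admits a cocone. -/
def IsCardinalFiltered (J : Type u) [Category.{v'} J] (α : Cardinal.{v}) : Prop :=
  ∀ D : Cat.{v, v}, Cardinal.mk (Arrow D) < α → ∀ F : D ⥤ J, Nonempty (Cocone F)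

/-- An object `X` is `α`-presentable when its hom-functor preserves `α`-filtered colimits. -/
def IsPresentableObj {K : Type u} [Category.{v} K] (α : Cardinal.{v}) (X : K) : Prop :=
  ∀ J : Cat.{v, v}, IsCardinalFiltered J α →
    PreservesColimitsOfShape J (coyoneda.obj (op X))

/-- `K` is locally `α`-presentable: it is cocomplete and has a small full subcategory of
`α`-presentable objects such that every object is an `α`-filtered colimit of objects
from it. -/
def IsLocallyPresentableAt (K : Type u) [Category.{v} K] (α : Cardinal.{v}) : Prop :=
  HasColimitsOfSize.{v, v} K ∧ α.IsRegular ∧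
    ∃ P : K → Prop, Small.{v} (Subtype P) ∧ (∀ X, P X → IsPresentableObj α X) ∧
      ∀ X : K, ∃ J : Cat.{v, v}, IsCardinalFiltered J α ∧
        ∃ (F : J ⥤ K) (c : Cocone F),
          (∀ j, P (F.obj j)) ∧ c.pt = X ∧ Nonempty (IsColimit c)

/-- `K` is locally presentable. -/
def IsLocallyPresentable (K : Type u) [Category.{v} K] : Prop :=
  ∃ α : Cardinal.{v}, IsLocallyPresentableAt K α

/-- `PF : PK ⥤ PL` is the (essentially unique) functor sending a small presheaf `X` to the
left Kan extension of `X` along `Fᵒᵖ`. -/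
def IsPshExtensionOf {K : Type u} {L : Type u'} [Category.{v} K] [Category.{v} L]
    (F : K ⥤ L) (PF : SmallPresheaf K ⥤ SmallPresheaf L) : Prop :=
  ∃ ε : ObjectProperty.ι (fun X : Kᵒᵖ ⥤ Type v => IsSmallFunctor.{v} X) ⟶
      PF ⋙ ObjectProperty.ι (fun X : Lᵒᵖ ⥤ Type v => IsSmallFunctor.{v} X) ⋙
        (Functor.whiskeringLeft Kᵒᵖ Lᵒᵖ (Type v)).obj F.op,
    ∀ X : SmallPresheaf K, Functor.IsLeftKanExtension ((PF.obj X).obj) (ε.app X)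

open MonoidalCategory in
/-- `D` is the Day convolution `∫^{A,B} K(-, A ⊗ B) × F A × G B` of the presheaves
`F` and `G`: it carries a universal wedge. -/
def IsDayConvolution {K : Type u} [Category.{v} K] [MonoidalCategory K]
    (F G D : Kᵒᵖ ⥤ Type v) : Prop :=
  ∃ u : ∀ A B : K, F.obj (op A) → G.obj (op B) → D.obj (op (A ⊗ B)),
    (∀ (A A' B B' : K) (f : A' ⟶ A) (g : B' ⟶ B) (x : F.obj (op A)) (y : G.obj (op B)),
      u A' B' (F.map f.op x) (G.map g.op y)
        = D.map (MonoidalCategory.tensorHom f g).op (u A B x y)) ∧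
    ∀ (H : Kᵒᵖ ⥤ Type v)
      (p : ∀ A B : K, F.obj (op A) → G.obj (op B) → H.obj (op (A ⊗ B))),
      (∀ (A A' B B' : K) (f : A' ⟶ A) (g : B' ⟶ B) (x : F.obj (op A)) (y : G.obj (op B)),
        p A' B' (F.map f.op x) (G.map g.op y)
          = H.map (MonoidalCategory.tensorHom f g).op (p A B x y)) →
      ∃! τ : D ⟶ H, ∀ (A B : K) (x : F.obj (op A)) (y : G.obj (op B)),
        τ.app (op (A ⊗ B)) (u A B x y) = p A B x y

/-- The restricted Yoneda embedding of `M` into presheaves on the full subcategory of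
`β`-presentable objects. -/
def restrictedYoneda (M : Type u) [Category.{v} M] (β : Cardinal.{v}) :
    M ⥤ ((ObjectProperty.FullSubcategory (IsPresentableObj β : M → Prop))ᵒᵖ ⥤ Type v) :=
  yoneda ⋙ (Functor.whiskeringLeft _ _ _).obj (ObjectProperty.ι _).op

/-!
A functor `S : B ⥤ Type` is small exactly when it is *covered* by a small set `P` of objects:
every element of `S X` has the form `S.map f y` with `y ∈ S a`, `a ∈ P`, and any two such
presentations are joined by a zigzag over `X`. This is the colimit formula for the left Kan
extension of `S` restricted to `P`.

Small presheaves on `K` have graph-shaped small colimits, computed pointwise. Let `c` be a small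
limit of small functors `D j` on them, all covered by `P₀`. An element of `c.pt` at `X` has a
presentation over `P₀` in each `D j`, and these are compatible only up to zigzags over `X`.
Gluing all objects along these zigzags gives one colimit `z` over `X`. At `z` the presentations
are strictly compatible, so the element factors through `z`. Two presentations of the same
element are connected in the same way. Every such `z` is the colimit of a diagram of a fixed
small shape whose vertices come from an earlier stage, so closing `P₀` under these colimits
`ω` times gives a small set that covers `c.pt`.
-/

theorem Relation.EqvGen.map {α β : Type*} {r : α → α → Prop} {r' : β → β → Prop} (f : α → β)
    (hf : ∀ a b, r a b → Relation.EqvGen r' (f a) (f b)) {x y : α} (h : Relation.EqvGen r x y) :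
    Relation.EqvGen r' (f x) (f y) :=
  Quot.eqvGen_exact (congrArg
    (Quot.lift (Quot.mk r' ∘ f) fun a b hab => Quot.eqvGen_sound (hf a b hab))
    (Quot.eqvGen_sound h))

theorem Relation.EqvGen.apply_eq {α β : Type*} {r : α → α → Prop} (f : α → β)
    (hf : ∀ a b, r a b → f a = f b) {x y : α} (h : Relation.EqvGen r x y) : f x = f y :=
  congrArg (Quot.lift f hf) (Quot.eqvGen_sound h)

theorem Relation.ReflTransGen.exists_seq {α : Type*} {r : α → α → Prop} {a b : α}
    (h : Relation.ReflTransGen r a b) :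
    ∃ (n : ℕ) (x : ℕ → α), x 0 = a ∧ x n = b ∧ ∀ i < n, r (x i) (x (i + 1)) := by
  induction h using Relation.ReflTransGen.head_induction_on with
  | refl => exact ⟨0, fun _ => b, rfl, rfl, by simp⟩
  | head hac _ ih =>
    obtain ⟨n, x, hx0, hxn, hx⟩ := ih
    refine ⟨n + 1, fun | 0 => _ | i + 1 => x i, rfl, hxn, fun i hi => ?_⟩
    cases i with
    | zero => simpa [hx0] using hac
    | succ i => exact hx i (by omega)

theorem Relation.EqvGen.exists_seq {α : Type*} {r : α → α → Prop} {a b : α}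
    (h : Relation.EqvGen r a b) : ∃ (n : ℕ) (x : ℕ → α), x 0 = a ∧ x n = b ∧
      ∀ i < n, Relation.SymmGen r (x i) (x (i + 1)) :=
  (Relation.EqvGen.reflTransGen_symmGen r ▸ h).exists_seq

namespace SmallFunctor

universe t b a

section Elements

variable {B : Type a} [Category.{b} B]

structure Elt (P : B → Prop) (S : B ⥤ Type t) (X : B) where
  ob : B
  hob : P ob
  hom : ob ⟶ X
  elt : S.obj ob

variable {P P' : B → Prop} {S S' : B ⥤ Type t} {X X' X'' : B}

namespace Elt

def val (e : Elt P S X) : S.obj X := S.map e.hom e.elt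

def Rel (e e' : Elt P S X) : Prop :=
  ∃ f : e.ob ⟶ e'.ob, f ≫ e'.hom = e.hom ∧ S.map f e.elt = e'.elt

abbrev Conn (e e' : Elt P S X) : Prop := Relation.EqvGen Rel e e'

theorem Rel.of_eq {e e' : Elt P S X} (h : e = e') : e.Rel e' :=
  h ▸ ⟨𝟙 e.ob, by simp, by simp⟩

theorem Rel.conn {e e' : Elt P S X} (h : e.Rel e') : e.Conn e' := .rel _ _ h

@[simps]
def push (e : Elt P S X) (g : X ⟶ X') : Elt P S X' := ⟨e.ob, e.hob, e.hom ≫ g, e.elt⟩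

@[simp] theorem push_val (e : Elt P S X) (g : X ⟶ X') : (e.push g).val = S.map g e.val :=
  S.map_comp_apply e.hom g e.elt

@[simp] theorem push_id (e : Elt P S X) : e.push (𝟙 X) = e := by
  cases e; simp [push]

theorem push_push (e : Elt P S X) (g : X ⟶ X') (g' : X' ⟶ X'') :
    (e.push g).push g' = e.push (g ≫ g') := by
  cases e; simp [push]

theorem Rel.push {e e' : Elt P S X} (h : e.Rel e') (g : X ⟶ X') :
    (e.push g).Rel (e'.push g) := by
  obtain ⟨f, hf, hfe⟩ := h
  exact ⟨f, show f ≫ e'.hom ≫ g = e.hom ≫ g by rw [← hf, Category.assoc], hfe⟩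

theorem Conn.push {e e' : Elt P S X} (h : e.Conn e') (g : X ⟶ X') : (e.push g).Conn (e'.push g) :=
  Relation.EqvGen.map _ (fun _ _ hr => (hr.push g).conn) h

def map (α : S ⟶ S') (e : Elt P S X) : Elt P S' X := ⟨e.ob, e.hob, e.hom, α.app e.ob e.elt⟩

@[simp] theorem map_val (α : S ⟶ S') (e : Elt P S X) : (e.map α).val = α.app X e.val :=
  (NatTrans.naturality_apply α e.hom e.elt).symm

theorem Rel.map {e e' : Elt P S X} (h : e.Rel e') (α : S ⟶ S') : (e.map α).Rel (e'.map α) := by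
  obtain ⟨f, hf, hfe⟩ := h
  refine ⟨f, hf, ?_⟩
  change S'.map f (α.app e.ob e.elt) = α.app e'.ob e'.elt
  rw [← hfe, NatTrans.naturality_apply]

theorem map_map {S'' : B ⥤ Type t} (α : S ⟶ S') (β : S' ⟶ S'') (e : Elt P S X) :
    (e.map α).map β = e.map (α ≫ β) :=
  rfl

theorem Conn.map {e e' : Elt P S X} (h : e.Conn e') (α : S ⟶ S') : (e.map α).Conn (e'.map α) :=
  Relation.EqvGen.map _ (fun _ _ hr => (hr.map α).conn) h

def mono (hP : P ≤ P') (e : Elt P S X) : Elt P' S X := ⟨e.ob, hP _ e.hob, e.hom, e.elt⟩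

theorem Conn.mono (hP : P ≤ P') {e e' : Elt P S X} (h : e.Conn e') :
    (e.mono hP).Conn (e'.mono hP) :=
  Relation.EqvGen.map (Elt.mono hP) (fun _ _ hr => .rel _ _ hr) h

end Elt

/-- The pointwise formula for left Kan extensions along `P`: `S.obj X` is the set of
elements `Elt P S X` modulo zigzags. -/
def Covers (P : B → Prop) (S : B ⥤ Type t) : Prop :=
  ∀ X : B, (∀ x : S.obj X, ∃ e : Elt P S X, e.val = x) ∧
    ∀ e e' : Elt P S X, e.val = e'.val → e.Conn e'

theorem Covers.mono (hP : P ≤ P') (hC : Covers P S) : Covers P' S := by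
  intro X
  refine ⟨fun x => let ⟨e, he⟩ := (hC X).1 x; ⟨e.mono hP, he⟩, fun e e' hv => ?_⟩
  -- Restate `e` and `e'` over `P` by covering their generating elements.
  obtain ⟨r, hr⟩ := (hC e.ob).1 e.elt
  obtain ⟨r', hr'⟩ := (hC e'.ob).1 e'.elt
  have h : ((r.push e.hom).mono hP).Rel e := ⟨r.hom, rfl, hr⟩
  have h' : ((r'.push e'.hom).mono hP).Rel e' := ⟨r'.hom, rfl, hr'⟩
  have hmid : (r.push e.hom).Conn (r'.push e'.hom) :=
    (hC X).2 _ _ (by rw [Elt.push_val, Elt.push_val, hr, hr']; exact hv)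
  exact .trans _ _ _ (.symm _ _ h.conn) (.trans _ _ _ (hmid.mono hP) h'.conn)

end Elements

section KanExtension

variable {B : Type a} [Category.{b} B] {P : B → Prop} {S G : B ⥤ Type t} {X X' : B}

def Elt.lift (γ : ObjectProperty.ι P ⋙ S ⟶ ObjectProperty.ι P ⋙ G) (e : Elt P S X) :
    G.obj X :=
  G.map e.hom (γ.app ⟨e.ob, e.hob⟩ e.elt)

theorem Elt.Rel.lift_eq (γ : ObjectProperty.ι P ⋙ S ⟶ ObjectProperty.ι P ⋙ G)
    {e e' : Elt P S X} (h : e.Rel e') : e.lift γ = e'.lift γ := by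
  obtain ⟨f, hf, hfe⟩ := h
  have hγ := NatTrans.naturality_apply γ
    (show (⟨e.ob, e.hob⟩ : ObjectProperty.FullSubcategory P) ⟶ ⟨e'.ob, e'.hob⟩ from
      ObjectProperty.homMk f) e.elt
  simp only [Functor.comp_obj, Functor.comp_map, ObjectProperty.ι_obj, ObjectProperty.ι_map,
    ObjectProperty.homMk_hom] at hγ
  rw [Elt.lift, Elt.lift, ← hf, G.map_comp_apply, ← hfe, ← hγ]

theorem Elt.Conn.lift_eq (γ : ObjectProperty.ι P ⋙ S ⟶ ObjectProperty.ι P ⋙ G)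
    {e e' : Elt P S X} (h : e.Conn e') : e.lift γ = e'.lift γ :=
  h.apply_eq _ fun _ _ hr => hr.lift_eq γ

theorem Elt.lift_push (γ : ObjectProperty.ι P ⋙ S ⟶ ObjectProperty.ι P ⋙ G)
    (e : Elt P S X) (g : X ⟶ X') : (e.push g).lift γ = G.map g (e.lift γ) :=
  G.map_comp_apply _ _ _

noncomputable def Covers.repr (hC : Covers P S) (x : S.obj X) : Elt P S X :=
  ((hC X).1 x).choose

theorem Covers.repr_val (hC : Covers P S) (x : S.obj X) : (hC.repr x).val = x :=
  ((hC X).1 x).choose_spec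

noncomputable def Covers.desc (hC : Covers P S)
    (γ : ObjectProperty.ι P ⋙ S ⟶ ObjectProperty.ι P ⋙ G) : S ⟶ G where
  app X := TypeCat.ofHom fun x => (hC.repr x).lift γ
  naturality X X' g := by
    ext x
    change (hC.repr (S.map g x)).lift γ = G.map g ((hC.repr x).lift γ)
    rw [← Elt.lift_push]
    exact Elt.Conn.lift_eq γ <| (hC X').2 _ _ (by rw [Elt.push_val, hC.repr_val, hC.repr_val])

theorem Covers.desc_app (hC : Covers P S)
    (γ : ObjectProperty.ι P ⋙ S ⟶ ObjectProperty.ι P ⋙ G) (e : Elt P S X) :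
    (hC.desc γ).app X e.val = e.lift γ :=
  Elt.Conn.lift_eq γ ((hC X).2 _ _ (hC.repr_val _))

theorem Covers.isLeftKanExtension (hC : Covers P S) :
    S.IsLeftKanExtension (𝟙 (ObjectProperty.ι P ⋙ S)) := by
  constructor
  refine ⟨IsInitial.ofUniqueHom (fun E => StructuredArrow.homMk (hC.desc E.hom) ?_) ?_⟩
  · ext b y
    have hy : (Elt.val (⟨b.obj, b.property, 𝟙 _, y⟩ : Elt P S b.obj)) = y := S.map_id_apply _ _
    change (hC.desc E.hom).app b.obj y = E.hom.app b y
    conv_lhs => rw [← hy]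
    rw [hC.desc_app, Elt.lift, E.right.map_id_apply]
  · intro E m
    apply StructuredArrow.hom_ext
    ext X x
    obtain ⟨e, rfl⟩ := (hC X).1 x
    have hm := types_congr_hom (NatTrans.congr_app m.w ⟨e.ob, e.hob⟩) e.elt
    simp only [Functor.LeftExtension.mk_hom, Functor.whiskeringLeft_obj_obj,
      Functor.whiskeringLeft_obj_map] at hm
    change m.right.app X (S.map e.hom e.elt) = (hC.desc E.hom).app X e.val
    rw [hC.desc_app]
    exact (NatTrans.naturality_apply m.right e.hom e.elt).trans (congrArg (E.right.map e.hom) hm)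

end KanExtension

section KanExtensionConverse

variable {B : Type a} [Category.{b} B] {P : B → Prop} {S : B ⥤ Type t}

variable (P S) in
def liftableSubfunctor : B ⥤ Type t where
  obj X := {x : S.obj X // ∃ e : Elt P S X, e.val = x}
  map g := TypeCat.ofHom fun x => ⟨S.map g x.1, by
    obtain ⟨e, he⟩ := x.2
    exact ⟨e.push g, by rw [Elt.push_val, he]⟩⟩
  map_id X := by ext; simp
  map_comp f g := by ext; simp

theorem exists_val_eq_of_isLeftKanExtension
    (h : S.IsLeftKanExtension (𝟙 (ObjectProperty.ι P ⋙ S))) {X : B} (x : S.obj X) :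
    ∃ e : Elt P S X, e.val = x := by
  let unit : ObjectProperty.ι P ⋙ S ⟶ ObjectProperty.ι P ⋙ liftableSubfunctor P S :=
    { app b := TypeCat.ofHom fun y => ⟨y, ⟨b.obj, b.property, 𝟙 _, y⟩, S.map_id_apply _ _⟩
      naturality _ _ _ := rfl }
  let incl : liftableSubfunctor P S ⟶ S := { app X := TypeCat.ofHom Subtype.val }
  let τ := S.descOfIsLeftKanExtension (𝟙 _) _ unit
  -- `τ ≫ incl` restricts to the identity on `P`, hence is the identity.
  have hτ : τ ≫ incl = 𝟙 S := by
    apply S.hom_ext_of_isLeftKanExtension (𝟙 (ObjectProperty.ι P ⋙ S))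
    ext b y
    have hfac := types_congr_hom (S.descOfIsLeftKanExtension_fac_app (𝟙 _) _ unit b) y
    simp only [NatTrans.id_app, types_id_apply, types_comp_apply] at hfac
    change (τ.app _ y).1 = y
    rw [hfac]
    rfl
  obtain ⟨e, he⟩ := (τ.app X x).2
  exact ⟨e, he.trans (types_congr_hom (NatTrans.congr_app hτ X) x)⟩

instance Elt.small [Small.{t} (Subtype P)] [LocallySmall.{t} B] (X : B) :
    Small.{t} (Elt P S X) :=
  small_of_surjective (f := fun q : Σ a : Subtype P, (a.1 ⟶ X) × S.obj a.1 =>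
    (⟨q.1.1, q.1.2, q.2.1, q.2.2⟩ : Elt P S X)) fun e => ⟨⟨⟨e.ob, e.hob⟩, e.hom, e.elt⟩, rfl⟩

variable (P S) in
noncomputable def eltQuot [∀ X, Small.{t} (Elt P S X)] : B ⥤ Type t where
  obj X := Shrink.{t} (Quot (@Elt.Rel _ _ P S X))
  map g := TypeCat.ofHom fun q => equivShrink _
    (Quot.map (·.push g) (fun _ _ h => h.push g) ((equivShrink _).symm q))
  map_id X := by
    ext q
    obtain ⟨q, rfl⟩ := (equivShrink _).surjective q
    induction q using Quot.ind
    simp [Quot.map]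
  map_comp f g := by
    ext q
    obtain ⟨q, rfl⟩ := (equivShrink _).surjective q
    induction q using Quot.ind
    simp [Quot.map, Elt.push_push]

theorem conn_of_isLeftKanExtension [Small.{t} (Subtype P)] [LocallySmall.{t} B]
    (h : S.IsLeftKanExtension (𝟙 (ObjectProperty.ι P ⋙ S))) {X : B} {e e' : Elt P S X}
    (hv : e.val = e'.val) : e.Conn e' := by
  let unit : ObjectProperty.ι P ⋙ S ⟶ ObjectProperty.ι P ⋙ eltQuot P S :=
    { app b := TypeCat.ofHom fun y => equivShrink _ (Quot.mk _ ⟨b.obj, b.property, 𝟙 _, y⟩)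
      naturality b b' f := by
        ext y
        change equivShrink _ (Quot.mk _ _) = equivShrink _ (Quot.map _ _
          ((equivShrink _).symm (equivShrink _ (Quot.mk _ _))))
        rw [Equiv.symm_apply_apply]
        exact congrArg _ (Quot.sound ⟨f.hom, by
          simp only [ObjectProperty.ι_map, Elt.push_hom, Category.id_comp]
          exact Category.comp_id _, rfl⟩).symm }
  let τ := S.descOfIsLeftKanExtension (𝟙 _) _ unit
  have hτ : ∀ e : Elt P S X, τ.app X e.val = equivShrink _ (Quot.mk _ e) := by
    intro e
    have hfac := types_congr_hom (S.descOfIsLeftKanExtension_fac_app (𝟙 _) _ unit ⟨e.ob, e.hob⟩)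
      e.elt
    simp only [NatTrans.id_app, types_id_apply, types_comp_apply] at hfac
    change τ.app X (S.map e.hom e.elt) = _
    rw [NatTrans.naturality_apply, show τ.app e.ob e.elt = _ from hfac]
    change equivShrink _ (Quot.map _ _ ((equivShrink _).symm (equivShrink _ (Quot.mk _ _)))) = _
    rw [Equiv.symm_apply_apply]
    exact congrArg _ (Quot.sound (Elt.Rel.of_eq (by simp [Elt.push])))
  exact Quot.eqvGen_exact ((equivShrink _).injective ((hτ e).symm.trans (hv ▸ hτ e')))

theorem isSmallFunctor_iff_exists_covers [LocallySmall.{t} B] :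
    IsSmallFunctor.{t} S ↔ ∃ P : B → Prop, Small.{t} (Subtype P) ∧ Covers P S := by
  refine ⟨fun ⟨P, hP, h⟩ => ⟨P, hP, fun X => ⟨exists_val_eq_of_isLeftKanExtension h,
    fun _ _ => conn_of_isLeftKanExtension h⟩⟩, fun ⟨P, hP, hC⟩ => ⟨P, hP, hC.isLeftKanExtension⟩⟩

theorem Covers.small_hom [Small.{t} (Subtype P)] (hC : Covers P S) (G : B ⥤ Type t) :
    Small.{t} (S ⟶ G) := by
  refine small_of_injective (f := fun τ (a : Subtype P) => (τ.app a.1 : S.obj a.1 → G.obj a.1))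
    fun τ τ' h => ?_
  ext X x
  obtain ⟨e, rfl⟩ := (hC X).1 x
  change τ.app X (S.map e.hom e.elt) = τ'.app X (S.map e.hom e.elt)
  rw [NatTrans.naturality_apply, NatTrans.naturality_apply]
  exact congrArg _ (congr_fun (congr_fun h ⟨e.ob, e.hob⟩) e.elt)

end KanExtensionConverse

section GraphColimit

variable {B : Type a} [Category.{b} B] {V : Type t} (ob : V → (B ⥤ Type t))
  (ed : ∀ s s' : V, (ob s ⟶ ob s') → Prop)

def graphColimitRel (l : B) (n n' : Σ v : V, (ob v).obj l) : Prop :=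
  ∃ h : ob n.1 ⟶ ob n'.1, ed n.1 n'.1 h ∧ h.app l n.2 = n'.2

def graphColimit : B ⥤ Type t where
  obj l := Quot (graphColimitRel ob ed l)
  map g := TypeCat.ofHom <| Quot.map (fun n => ⟨n.1, (ob n.1).map g n.2⟩) <| by
    rintro n n' ⟨h, hh, he⟩
    exact ⟨h, hh, by rw [← he]; exact NatTrans.naturality_apply h g n.2⟩
  map_id l := by
    ext x
    induction x using Quot.ind
    simp [Quot.map]
  map_comp f g := by
    ext x
    induction x using Quot.ind
    simp [Quot.map]

namespace graphColimit

def ι (v : V) : ob v ⟶ graphColimit ob ed where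
  app _ := TypeCat.ofHom fun x => Quot.mk _ ⟨v, x⟩
  naturality _ _ _ := rfl

variable {ob ed}

theorem ι_comp {s s' : V} (h : ob s ⟶ ob s') (hh : ed s s' h) : h ≫ ι ob ed s' = ι ob ed s := by
  ext _ x
  exact (Quot.sound ⟨h, hh, rfl⟩).symm

def desc (Y : B ⥤ Type t) (w : ∀ v, ob v ⟶ Y)
    (hw : ∀ (s s' : V) (h : ob s ⟶ ob s'), ed s s' h → h ≫ w s' = w s) :
    graphColimit ob ed ⟶ Y where
  app l := TypeCat.ofHom <| Quot.lift (fun n => (w n.1).app l n.2) <| by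
    rintro n n' ⟨h, hh, he⟩
    rw [← he]
    exact (types_congr_hom (NatTrans.congr_app (hw _ _ h hh) l) n.2).symm
  naturality l l' g := by
    ext x
    induction x using Quot.ind with
    | _ n => exact NatTrans.naturality_apply (w n.1) g n.2

theorem exists_eq_map_ι {P : B → Prop} {l : B} (e : Elt P (graphColimit ob ed) l) :
    ∃ (v : V) (q : Elt P (ob v) l), q.map (ι ob ed v) = e := by
  obtain ⟨a, ha, f, z⟩ := e
  obtain ⟨⟨v, y⟩, rfl⟩ := Quot.exists_rep z
  exact ⟨v, ⟨a, ha, f, y⟩, rfl⟩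

end graphColimit

open graphColimit in
theorem covers_graphColimit {P : B → Prop} (hP : ∀ v, Covers P (ob v)) :
    Covers P (graphColimit ob ed) := by
  intro l
  refine ⟨fun x => ?_, fun e₁ e₂ hv => ?_⟩
  · obtain ⟨⟨v, y⟩, rfl⟩ := Quot.exists_rep x
    obtain ⟨q, rfl⟩ := (hP v l).1 y
    exact ⟨q.map (ι ob ed v), Elt.map_val _ _⟩
  let R (n : Σ v, (ob v).obj l) : Elt P (graphColimit ob ed) l :=
    ((hP n.1 l).1 n.2).choose.map (ι ob ed n.1)
  have conn_R {v : V} (q : Elt P (ob v) l) : (q.map (ι ob ed v)).Conn (R ⟨v, q.val⟩) :=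
    ((hP v l).2 _ _ ((hP v l).1 q.val).choose_spec.symm).map _
  have conn_R_of_rel {n n' : Σ v, (ob v).obj l}
      (hn : Relation.EqvGen (graphColimitRel ob ed l) n n') : (R n).Conn (R n') := by
    refine hn.map R fun n n' ⟨h, hh, he⟩ => ?_
    have hval : (((hP n.1 l).1 n.2).choose.map h).val = n'.2 := by
      rw [Elt.map_val, ((hP n.1 l).1 n.2).choose_spec, he]
    have := conn_R (((hP n.1 l).1 n.2).choose.map h)
    rwa [hval, Elt.map_map, ι_comp h hh] at this
  obtain ⟨v₁, q₁, rfl⟩ := exists_eq_map_ι e₁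
  obtain ⟨v₂, q₂, rfl⟩ := exists_eq_map_ι e₂
  rw [Elt.map_val, Elt.map_val] at hv
  exact .trans _ _ _ (conn_R q₁) <| .trans _ _ _ (conn_R_of_rel (Quot.eqvGen_exact hv))
    (.symm _ _ (conn_R q₂))

end GraphColimit

section Limits

variable {A : Type*} [Category A] {J : Type v} [SmallCategory J] {D : J ⥤ (A ⥤ Type v)}
  {c : Cone D}

theorem ext_of_isLimit (hc : IsLimit c) {z : A} {x x' : c.pt.obj z}
    (h : ∀ j, (c.π.app j).app z x = (c.π.app j).app z x') : x = x' :=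
  (Types.isLimitEquivSections (isLimitOfPreserves ((evaluation A _).obj z) hc)).injective
    (Subtype.ext (funext h))

theorem exists_of_isLimit (hc : IsLimit c) {z : A} (y : ∀ j, (D.obj j).obj z)
    (hy : ∀ {j j'} (f : j ⟶ j'), (D.map f).app z (y j) = y j') :
    ∃ x : c.pt.obj z, ∀ j, (c.π.app j).app z x = y j :=
  let hcz := isLimitOfPreserves ((evaluation A _).obj z) hc
  ⟨(Types.isLimitEquivSections hcz).symm ⟨y, hy⟩,
    Types.isLimitEquivSections_symm_apply hcz ⟨y, hy⟩⟩

end Limits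

theorem small_subtype_exists {ι α : Type*} [Small.{t} ι] (P : ι → α → Prop)
    [∀ i, Small.{t} (Subtype (P i))] : Small.{t} {x : α // ∃ i, P i x} :=
  small_of_surjective (f := fun q : Σ i, Subtype (P i) => ⟨q.2.1, q.1, q.2.2⟩)
    fun ⟨x, i, hi⟩ => ⟨⟨i, x, hi⟩, rfl⟩

section SmallPresheaves

variable {K : Type u} [Category.{v} K]

noncomputable def coverSet (F : SmallPresheaf K) : Kᵒᵖ → Prop :=
  (isSmallFunctor_iff_exists_covers.1 F.2).choose

instance small_coverSet (F : SmallPresheaf K) : Small.{v} (Subtype (coverSet F)) :=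
  (isSmallFunctor_iff_exists_covers.1 F.2).choose_spec.1

theorem covers_coverSet (F : SmallPresheaf K) : Covers (coverSet F) F.obj :=
  (isSmallFunctor_iff_exists_covers.1 F.2).choose_spec.2

instance small_hom_obj (F G : SmallPresheaf K) : Small.{v} (F.obj ⟶ G.obj) :=
  (covers_coverSet F).small_hom G.obj

instance : LocallySmall.{v} (SmallPresheaf K) where
  hom_small _ _ := small_map InducedCategory.homEquiv

structure Diagram (V : Type v) (Q : SmallPresheaf K → Prop) where
  obj : V → SmallPresheaf K
  prop : ∀ v, Q (obj v)
  edge : ∀ s s' : V, ((obj s).obj ⟶ (obj s').obj) → Prop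

namespace Diagram

variable {V : Type v} {Q : SmallPresheaf K → Prop}

def colimit (d : Diagram V Q) : SmallPresheaf K :=
  ⟨graphColimit (fun v => (d.obj v).obj) d.edge, isSmallFunctor_iff_exists_covers.2
    ⟨_, small_subtype_exists fun v => coverSet (d.obj v),
      covers_graphColimit _ _ fun v => (covers_coverSet _).mono fun _ h => ⟨v, h⟩⟩⟩

def ι (d : Diagram V Q) (v : V) : d.obj v ⟶ d.colimit :=
  ObjectProperty.homMk (graphColimit.ι (fun v => (d.obj v).obj) d.edge v)

instance small [Small.{v} (Subtype Q)] : Small.{v} (Diagram V Q) :=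
  small_of_surjective (f := fun q : Σ f : V → Subtype Q,
      ∀ s s' : V, Set ((f s).1.obj ⟶ (f s').1.obj) =>
      (⟨fun v => (q.1 v).1, fun v => (q.1 v).2, fun s s' h => h ∈ q.2 s s'⟩ : Diagram V Q))
    fun d => ⟨⟨fun v => ⟨d.obj v, d.prop v⟩, fun s s' => {h | d.edge s s' h}⟩, rfl⟩

variable (Q) in
def overObj {X : SmallPresheaf K} (obj : V → SmallPresheaf K) (prop : ∀ v, Q (obj v))
    (π : ∀ v, obj v ⟶ X) : Diagram V Q :=
  ⟨obj, prop, fun s s' h => h ≫ (π s').hom = (π s).hom⟩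

variable {X : SmallPresheaf K} {obj : V → SmallPresheaf K} {prop : ∀ v, Q (obj v)}
  {π : ∀ v, obj v ⟶ X}

def descOver : (overObj Q obj prop π).colimit ⟶ X :=
  ObjectProperty.homMk (graphColimit.desc X.obj (fun v => (π v).hom) fun _ _ _ h => h)

theorem ι_descOver (v : V) : (overObj Q obj prop π).ι v ≫ descOver = π v :=
  ObjectProperty.hom_ext _ rfl

theorem map_ι_eq_of_rel (F : SmallPresheaf K ⥤ Type v) {s s' : V} {y : F.obj (obj s)}
    {y' : F.obj (obj s')}
    (h : Elt.Rel (⟨obj s, prop s, π s, y⟩ : Elt Q F X) ⟨obj s', prop s', π s', y'⟩) :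
    F.map ((overObj Q obj prop π).ι s) y = F.map ((overObj Q obj prop π).ι s') y' := by
  obtain ⟨f, hf, hy⟩ := h
  have hι : f ≫ (overObj Q obj prop π).ι s' = (overObj Q obj prop π).ι s :=
    ObjectProperty.hom_ext _ (graphColimit.ι_comp (ob := fun v => (obj v).obj)
      (ed := (overObj Q obj prop π).edge) f.hom (congrArg InducedCategory.Hom.hom hf))
  calc F.map ((overObj Q obj prop π).ι s) y
      = F.map (f ≫ (overObj Q obj prop π).ι s') y := congrArg (fun g => F.map g y) hι.symm
    _ = _ := (F.map_comp_apply _ _ _).trans (congrArg _ hy)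

theorem map_ι_eq_of_symmGen (F : SmallPresheaf K ⥤ Type v) {s s' : V} {y : F.obj (obj s)}
    {y' : F.obj (obj s')}
    (h : Relation.SymmGen Elt.Rel (⟨obj s, prop s, π s, y⟩ : Elt Q F X)
      ⟨obj s', prop s', π s', y'⟩) :
    F.map ((overObj Q obj prop π).ι s) y = F.map ((overObj Q obj prop π).ι s') y' :=
  h.elim (map_ι_eq_of_rel F) fun h' => (map_ι_eq_of_rel F h').symm

end Diagram

/-- The objects along the zigzags are indexed by their positions in `τ × ℕ`, so the shape of the
glued diagram does not depend on `X`. -/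
theorem exists_colimit_map_eq_of_conn {κ τ : Type v} {Q : SmallPresheaf K → Prop}
    {X : SmallPresheaf K} (F : τ → SmallPresheaf K ⥤ Type v) (obj : κ → SmallPresheaf K)
    (prop : ∀ k, Q (obj k)) (π : ∀ k, obj k ⟶ X) (src tgt : τ → κ)
    (y : ∀ t, (F t).obj (obj (src t))) (y' : ∀ t, (F t).obj (obj (tgt t)))
    (h : ∀ t, Elt.Conn (⟨obj (src t), prop _, π _, y t⟩ : Elt Q (F t) X)
      ⟨obj (tgt t), prop _, π _, y' t⟩) :
    ∃ (d : Diagram (κ ⊕ τ × ℕ) Q) (u : d.colimit ⟶ X) (g : ∀ k, obj k ⟶ d.colimit),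
      (∀ k, g k ≫ u = π k) ∧ ∀ t, (F t).map (g (src t)) (y t) = (F t).map (g (tgt t)) (y' t) := by
  choose n x hx0 hxn hx using fun t => (h t).exists_seq
  let obj' : κ ⊕ τ × ℕ → SmallPresheaf K
    | .inl k => obj k
    | .inr (t, i) => (x t i).ob
  let prop' : ∀ v, Q (obj' v)
    | .inl k => prop k
    | .inr (t, i) => (x t i).hob
  let π' : ∀ v, obj' v ⟶ X
    | .inl k => π k
    | .inr (t, i) => (x t i).hom
  let d := Diagram.overObj Q obj' prop' π'
  refine ⟨d, Diagram.descOver, fun k => d.ι (.inl k), fun k => Diagram.ι_descOver _, fun t => ?_⟩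
  have chain : ∀ i ≤ n t, (F t).map (d.ι (.inl (src t))) (y t) =
      (F t).map (d.ι (.inr (t, i))) (x t i).elt := by
    intro i hi
    induction i with
    | zero => exact Diagram.map_ι_eq_of_symmGen (F t) (.of_rel (Elt.Rel.of_eq (hx0 t).symm))
    | succ i ih => exact (ih (by omega)).trans (Diagram.map_ι_eq_of_symmGen (F t) (hx t i hi))
  exact (chain _ le_rfl).trans
    (Diagram.map_ι_eq_of_symmGen (F t) (.of_rel (Elt.Rel.of_eq (hxn t))))

section GlueClosure

variable {ι : Type*} (W : ι → Type v) (P₀ : SmallPresheaf K → Prop)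

def glueStage : ℕ → SmallPresheaf K → Prop
  | 0 => P₀
  | n + 1 => fun F => glueStage n F ∨ ∃ (i : ι) (d : Diagram (W i) (glueStage n)), d.colimit = F

def glueClosure (F : SmallPresheaf K) : Prop := ∃ n, glueStage W P₀ n F

variable {W P₀}

theorem glueStage_mono : Monotone (glueStage W P₀) :=
  monotone_nat_of_le_succ fun _ _ h => Or.inl h

theorem colimit_mem_glueStage {n : ℕ} {i : ι} (d : Diagram (W i) (glueStage W P₀ n)) :
    glueStage W P₀ (n + 1) d.colimit :=
  Or.inr ⟨i, d, rfl⟩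

theorem glueStage_le_glueClosure (n : ℕ) : glueStage W P₀ n ≤ glueClosure W P₀ :=
  fun _ h => ⟨n, h⟩

instance small_glueStage [Small.{v} ι] [Small.{v} (Subtype P₀)] :
    ∀ n, Small.{v} (Subtype (glueStage W P₀ n))
  | 0 => inferInstanceAs (Small.{v} (Subtype P₀))
  | n + 1 =>
    have := small_glueStage n
    small_of_surjective (f := fun q : Subtype (glueStage W P₀ n) ⊕
        Σ i, Diagram (W i) (glueStage W P₀ n) => match q with
      | .inl F => (⟨F.1, Or.inl F.2⟩ : Subtype (glueStage W P₀ (n + 1)))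
      | .inr ⟨_, d⟩ => ⟨d.colimit, colimit_mem_glueStage d⟩) <| by
      rintro ⟨F, hF | ⟨i, d, rfl⟩⟩
      exacts [⟨.inl ⟨F, hF⟩, rfl⟩, ⟨.inr ⟨i, d⟩, rfl⟩]

instance small_glueClosure [Small.{v} ι] [Small.{v} (Subtype P₀)] :
    Small.{v} (Subtype (glueClosure W P₀)) :=
  small_subtype_exists _

end GlueClosure

section LimitsOfSmallFunctors

variable {J : Type v} [SmallCategory J] {D : J ⥤ (SmallPresheaf K ⥤ Type v)} {c : Cone D}

theorem exists_elt_val_of_isLimit (hc : IsLimit c) {P Q : SmallPresheaf K → Prop}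
    (hD : ∀ j, Covers P (D.obj j)) (hQ : ∀ d : Diagram (J ⊕ Arrow J × ℕ) P, Q d.colimit)
    {X : SmallPresheaf K} (x : c.pt.obj X) : ∃ e : Elt Q c.pt X, e.val = x := by
  choose e he using fun j => (hD j X).1 ((c.π.app j).app X x)
  have hconn (f : Arrow J) : ((e f.left).map (D.map f.hom)).Conn (e f.right) :=
    (hD f.right X).2 _ _ <| by
      rw [Elt.map_val, he, he, ← NatTrans.comp_app_apply, Cone.w]
  obtain ⟨d, u, g, hgu, hg⟩ := exists_colimit_map_eq_of_conn (fun f : Arrow J => D.obj f.right)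
    (fun j => (e j).ob) (fun j => (e j).hob) (fun j => (e j).hom) Arrow.left Arrow.right
    (fun f => (D.map f.hom).app _ (e f.left).elt) (fun f => (e f.right).elt) hconn
  obtain ⟨x', hx'⟩ := exists_of_isLimit hc (fun j => (D.obj j).map (g j) (e j).elt)
    fun f => (NatTrans.naturality_apply (D.map f) (g _) _).trans (hg (Arrow.mk f))
  refine ⟨⟨d.colimit, hQ d, u, x'⟩, ext_of_isLimit hc fun j => ?_⟩
  calc (c.π.app j).app X (c.pt.map u x')
      = (D.obj j).map u ((D.obj j).map (g j) (e j).elt) := by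
        rw [← hx']; exact NatTrans.naturality_apply _ _ _
    _ = (D.obj j).map (g j ≫ u) (e j).elt := (Functor.map_comp_apply _ _ _ _).symm
    _ = (c.π.app j).app X x := by rw [hgu]; exact he j

theorem conn_of_isLimit (hc : IsLimit c) {P Q : SmallPresheaf K → Prop} (hPQ : P ≤ Q)
    (hD : ∀ j, Covers P (D.obj j))
    (hQ : ∀ d : Diagram (ULift.{v} Bool ⊕ J × ℕ) P, Q d.colimit) {X : SmallPresheaf K}
    {e₁ e₂ : Elt P c.pt X} (hv : e₁.val = e₂.val) : (e₁.mono hPQ).Conn (e₂.mono hPQ) := by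
  let obj : ULift.{v} Bool → SmallPresheaf K
    | ⟨true⟩ => e₁.ob
    | ⟨false⟩ => e₂.ob
  let prop : ∀ b, P (obj b)
    | ⟨true⟩ => e₁.hob
    | ⟨false⟩ => e₂.hob
  let π : ∀ b, obj b ⟶ X
    | ⟨true⟩ => e₁.hom
    | ⟨false⟩ => e₂.hom
  have hconn (j : J) : (e₁.map (c.π.app j)).Conn (e₂.map (c.π.app j)) :=
    (hD j X).2 _ _ (by rw [Elt.map_val, Elt.map_val, hv])
  obtain ⟨d, u, g, hgu, hg⟩ := exists_colimit_map_eq_of_conn (fun j => D.obj j) obj prop π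
    (fun _ => ⟨true⟩) (fun _ => ⟨false⟩) (fun j => (c.π.app j).app _ e₁.elt)
    (fun j => (c.π.app j).app _ e₂.elt) hconn
  have hmid : c.pt.map (g ⟨true⟩) e₁.elt = c.pt.map (g ⟨false⟩) e₂.elt :=
    ext_of_isLimit hc fun j => (NatTrans.naturality_apply _ _ _).trans
      ((hg j).trans (NatTrans.naturality_apply _ _ _).symm)
  have h₁ : (e₁.mono hPQ).Rel ⟨d.colimit, hQ d, u, c.pt.map (g ⟨true⟩) e₁.elt⟩ :=
    ⟨g ⟨true⟩, hgu _, rfl⟩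
  have h₂ : (e₂.mono hPQ).Rel ⟨d.colimit, hQ d, u, c.pt.map (g ⟨true⟩) e₁.elt⟩ :=
    ⟨g ⟨false⟩, hgu _, hmid.symm⟩
  exact .trans _ _ _ h₁.conn (.symm _ _ h₂.conn)

variable (J) in
def glueShape : Bool → Type v
  | true => J ⊕ Arrow J × ℕ
  | false => ULift.{v} Bool ⊕ J × ℕ

theorem covers_of_isLimit (hc : IsLimit c) {P₀ : SmallPresheaf K → Prop}
    (hD : ∀ j, Covers P₀ (D.obj j)) : Covers (glueClosure (glueShape J) P₀) c.pt := by
  intro X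
  refine ⟨exists_elt_val_of_isLimit hc hD
    fun d => ⟨1, colimit_mem_glueStage (W := glueShape J) (n := 0) (i := true) d⟩,
    fun e₁ e₂ hv => ?_⟩
  obtain ⟨n₁, h₁⟩ := e₁.hob
  obtain ⟨n₂, h₂⟩ := e₂.hob
  let n := max n₁ n₂
  let e₁' : Elt (glueStage (glueShape J) P₀ n) c.pt X :=
    ⟨e₁.ob, glueStage_mono (le_max_left _ _) _ h₁, e₁.hom, e₁.elt⟩
  let e₂' : Elt (glueStage (glueShape J) P₀ n) c.pt X :=
    ⟨e₂.ob, glueStage_mono (le_max_right _ _) _ h₂, e₂.hom, e₂.elt⟩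
  exact conn_of_isLimit hc (glueStage_le_glueClosure n)
    (fun j => (hD j).mono (glueStage_mono (Nat.zero_le n)))
    (fun d => ⟨n + 1, colimit_mem_glueStage (W := glueShape J) (i := false) d⟩)
    (e₁ := e₁') (e₂ := e₂') hv

theorem isSmallFunctor_of_isLimit (hc : IsLimit c) (hD : ∀ j, IsSmallFunctor.{v} (D.obj j)) :
    IsSmallFunctor.{v} c.pt := by
  choose P hP hPD using fun j => isSmallFunctor_iff_exists_covers.1 (hD j)
  have := small_subtype_exists P
  exact isSmallFunctor_iff_exists_covers.2 ⟨glueClosure (glueShape J) fun F => ∃ j, P j F,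
    inferInstance, covers_of_isLimit hc fun j => (hPD j).mono fun _ h => ⟨j, h⟩⟩

end LimitsOfSmallFunctors

instance isClosedUnderLimitsOfShape_isSmallFunctor (J : Type v) [SmallCategory J] :
    ObjectProperty.IsClosedUnderLimitsOfShape
      (fun F : SmallPresheaf K ⥤ Type v => IsSmallFunctor.{v} F) J :=
  ⟨fun _ ⟨p⟩ => isSmallFunctor_of_isLimit p.isLimit p.prop_diag_obj⟩

end SmallPresheaves

end SmallFunctor

/-- For any category `L`, the category of small functors from `P(Lᵒᵖ)`
to `Set` (equivalently, `PK` for `K = P(Lᵒᵖ)ᵒᵖ`) is complete. -/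
theorem statement6 (L : Type u) [Category.{v} L] :
    HasLimitsOfSize.{v, v}
      (ObjectProperty.FullSubcategory
        (fun F : SmallPresheaf Lᵒᵖ ⥤ Type v => IsSmallFunctor.{v} F)) :=
  ⟨fun J _ => hasLimitsOfShape_of_closedUnderLimits J _⟩
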